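/- arXiv:2407.10867 — 8 statements merged into one kernel-verified Lean document; each statement's English description precedes it below -/
import Mathlib

section
/- Let Γ ∈ ℝ^{n×d} be an admissible ℓ∞-perturbation of X with budget δ and adversarial node set U, let X̃ = X + Γ, and let Δ = X̃X̃ᵀ − XXᵀ. Then for all i, j ∈ {1,…,n} it holds that Δ^L_{ij} ≤ Δ_{ij} ≤ Δ^U_{ij}, where Δ^L_{ij} = −δ‖X_j‖₁·1[i∈U] − δ‖X_i‖₁·1[j∈U] − δ²d·1[i∈U ∧ j∈U ∧ i≠j] and Δ^U_{ij} = δ‖X_j‖₁·1[i∈U] + δ‖X_i‖₁·1[j∈U] + δ²d·1[i∈U ∧ j∈U]. -/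
open Finset Matrix

private lemma cross_bound {d : ℕ} (A B : Fin d → ℝ) (δ : ℝ)
    (hA : ∀ p, |A p| ≤ δ) :
    |∑ p, A p * B p| ≤ δ * ∑ p, |B p| := by
  calc |∑ p, A p * B p| ≤ ∑ p, |A p * B p| := Finset.abs_sum_le_sum_abs _ _
    _ ≤ ∑ p, δ * |B p| := by
        refine Finset.sum_le_sum fun p _ => ?_
        rw [abs_mul]
        exact mul_le_mul_of_nonneg_right (hA p) (abs_nonneg _)
    _ = δ * ∑ p, |B p| := by rw [Finset.mul_sum]

/-- **Elementwise bounds on the Gram-matrix perturbation, ℓ∞ case.**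
If `Γ` is an admissible ℓ∞-perturbation of `X` with budget `δ` and adversarial node
set `U` (i.e. `Γ i = 0` for `i ∉ U` and `|Γ i p| ≤ δ` for `i ∈ U`), and
`Δ = (X+Γ)(X+Γ)ᵀ − XXᵀ`, then `Δᴸ_ij ≤ Δ_ij ≤ Δᵁ_ij` for all `i, j`. -/
theorem delta_bounds_linf {n d : ℕ} (X Γ : Matrix (Fin n) (Fin d) ℝ)
    (U : Finset (Fin n)) (δ : ℝ) (hδ : 0 ≤ δ)
    (hG0 : ∀ i, i ∉ U → Γ i = 0)
    (hGinf : ∀ i ∈ U, ∀ p, |Γ i p| ≤ δ) :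
    ∀ i j : Fin n,
      (-(δ * ∑ p, |X j p|) * (if i ∈ U then 1 else 0)
        - δ * (∑ p, |X i p|) * (if j ∈ U then 1 else 0)
        - δ ^ 2 * d * (if i ∈ U ∧ j ∈ U ∧ i ≠ j then 1 else 0))
        ≤ ((X + Γ) * (X + Γ)ᵀ - X * Xᵀ) i j
      ∧ ((X + Γ) * (X + Γ)ᵀ - X * Xᵀ) i j
        ≤ (δ * (∑ p, |X j p|) * (if i ∈ U then 1 else 0)
            + δ * (∑ p, |X i p|) * (if j ∈ U then 1 else 0)
            + δ ^ 2 * d * (if i ∈ U ∧ j ∈ U then 1 else 0)) := by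
  intro i j
  have key : ((X + Γ) * (X + Γ)ᵀ - X * Xᵀ) i j
      = (∑ p, Γ i p * X j p) + (∑ p, X i p * Γ j p) + ∑ p, Γ i p * Γ j p := by
    simp only [Matrix.sub_apply, Matrix.mul_apply, Matrix.add_apply,
      Matrix.transpose_apply, ← Finset.sum_add_distrib, ← Finset.sum_sub_distrib]
    exact Finset.sum_congr rfl fun p _ => by ring
  -- bounds on first term
  have h1 : |∑ p, Γ i p * X j p| ≤ δ * (∑ p, |X j p|) * (if i ∈ U then 1 else 0) := by
    by_cases hi : i ∈ U
    · simpa [hi] using cross_bound (Γ i) (X j) δ (hGinf i hi)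
    · simp [hi, hG0 i hi]
  have h2 : |∑ p, X i p * Γ j p| ≤ δ * (∑ p, |X i p|) * (if j ∈ U then 1 else 0) := by
    by_cases hj : j ∈ U
    · have := cross_bound (Γ j) (X i) δ (hGinf j hj)
      simp only [hj, if_pos, mul_one]
      calc |∑ p, X i p * Γ j p| = |∑ p, Γ j p * X i p| := by
            congr 1; exact Finset.sum_congr rfl fun p _ => by ring
        _ ≤ δ * ∑ p, |X i p| := this
    · simp [hj, hG0 j hj]
  have h3U : ∑ p, Γ i p * Γ j p ≤ δ ^ 2 * d * (if i ∈ U ∧ j ∈ U then 1 else 0) := by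
    by_cases hij : i ∈ U ∧ j ∈ U
    · have hi := hij.1; have hj := hij.2
      have : |∑ p, Γ i p * Γ j p| ≤ δ ^ 2 * d := by
        calc |∑ p, Γ i p * Γ j p| ≤ ∑ p, |Γ i p * Γ j p| := Finset.abs_sum_le_sum_abs _ _
          _ ≤ ∑ _p : Fin d, δ ^ 2 := by
              refine Finset.sum_le_sum fun p _ => ?_
              rw [abs_mul, sq]
              exact mul_le_mul (hGinf i hi p) (hGinf j hj p) (abs_nonneg _) hδ
          _ = δ ^ 2 * d := by simp [mul_comm]
      rw [if_pos hij, mul_one]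
      exact (abs_le.mp this).2
    · rcases not_and_or.mp hij with h | h
      · simp [hij, hG0 i h]
      · simp [hij, hG0 j h]
  have h3L : -(δ ^ 2 * d * (if i ∈ U ∧ j ∈ U ∧ i ≠ j then 1 else 0))
      ≤ ∑ p, Γ i p * Γ j p := by
    by_cases hij : i ∈ U ∧ j ∈ U ∧ i ≠ j
    · have hi := hij.1; have hj := hij.2.1
      have : |∑ p, Γ i p * Γ j p| ≤ δ ^ 2 * d := by
        calc |∑ p, Γ i p * Γ j p| ≤ ∑ p, |Γ i p * Γ j p| := Finset.abs_sum_le_sum_abs _ _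
          _ ≤ ∑ _p : Fin d, δ ^ 2 := by
              refine Finset.sum_le_sum fun p _ => ?_
              rw [abs_mul, sq]
              exact mul_le_mul (hGinf i hi p) (hGinf j hj p) (abs_nonneg _) hδ
          _ = δ ^ 2 * d := by simp [mul_comm]
      rw [if_pos hij, mul_one]
      exact (abs_le.mp this).1
    · simp only [hij, if_neg, not_false_iff, mul_zero, neg_zero]
      by_cases hi : i ∈ U
      · by_cases hj : j ∈ U
        · have hij2 : i = j := by
            by_contra h
            exact hij ⟨hi, hj, h⟩
          subst hij2
          exact Finset.sum_nonneg fun p _ => mul_self_nonneg _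
        · simp [hG0 j hj]
      · simp [hG0 i hi]
  constructor
  · rw [key]
    have e1 := (abs_le.mp h1).1
    have e2 := (abs_le.mp h2).1
    have : -(δ * (∑ p, |X j p|) * (if i ∈ U then 1 else 0))
        - δ * (∑ p, |X i p|) * (if j ∈ U then 1 else 0)
        - δ ^ 2 * d * (if i ∈ U ∧ j ∈ U ∧ i ≠ j then 1 else 0)
        ≤ (∑ p, Γ i p * X j p) + (∑ p, X i p * Γ j p) + ∑ p, Γ i p * Γ j p := by
      have := add_le_add (add_le_add e1 e2) h3L
      linarith
    linarith [this]
  · rw [key]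
    have e1 := (abs_le.mp h1).2
    have e2 := (abs_le.mp h2).2
    linarith
end

section
/- Let y ∈ {−1,1}^m, C > 0, and elementwise kernel bounds Q^L_{ij} ≤ Q^U_{ij}. Define M_{u_i} = UB_i − 1 and M_{v_i} = 1 − LB_i, where UB_i = ∑_{j : y_i y_j = 1} C·max(Q^U_{ij}, 0) − ∑_{j : y_i y_j = −1} C·min(Q^L_{ij}, 0) and LB_i = ∑_{j : y_i y_j = 1} C·min(Q^L_{ij}, 0) − ∑_{j : y_i y_j = −1} C·max(Q^U_{ij}, 0). Suppose Q̃ ∈ ℝ^{m×m} satisfies Q^L_{ij} ≤ Q̃_{ij} ≤ Q^U_{ij} for all i, j, and suppose (α, u, v) satisfies the KKT system for Q̃: 0 ≤ α_i ≤ C, u_i ≥ 0, v_i ≥ 0, ∑_{j=1}^m y_i y_j α_j Q̃_{ij} − 1 − u_i + v_i = 0, u_i α_i = 0, and v_i (C − α_i) = 0 for all i. Then there exist s, t ∈ {0,1}^m such that for all i ∈ {1,…,m}: u_i ≤ M_{u_i} s_i, α_i ≤ C(1 − s_i), v_i ≤ M_{v_i} t_i, and C − α_i ≤ C(1 − t_i).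 -/
open Finset

lemma prod_bounds {C a L x U : ℝ} (ha0 : 0 ≤ a) (haC : a ≤ C) (hL : L ≤ x) (hU : x ≤ U) :
    C * min L 0 ≤ a * x ∧ a * x ≤ C * max U 0 := by
  constructor
  · have h1 : min L 0 ≤ x := le_trans (min_le_left _ _) hL
    have h2 : a * min L 0 ≤ a * x := mul_le_mul_of_nonneg_left h1 ha0
    have h3 : C * min L 0 ≤ a * min L 0 :=
      mul_le_mul_of_nonpos_right haC (min_le_right _ _)
    linarith
  · have h1 : x ≤ max U 0 := le_trans hU (le_max_left _ _)
    have h2 : a * x ≤ a * max U 0 := mul_le_mul_of_nonneg_left h1 ha0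
    have h3 : a * max U 0 ≤ C * max U 0 :=
      mul_le_mul_of_nonneg_right haC (le_max_right _ _)
    linarith

/-- **Validity of the big-M reformulation of complementary slackness.**
With `M_{u_i} = UB_i − 1` and `M_{v_i} = 1 − LB_i` derived from the elementwise
kernel bounds, any KKT point `(α, u, v)` for a kernel `Q̃` within the bounds admits
binary variables `s, t ∈ {0,1}^m` satisfying the big-M constraints. -/
theorem bigM_valid {m : ℕ} (y : Fin m → ℝ) (hy : ∀ i, y i = 1 ∨ y i = -1)
    (C : ℝ) (hC : 0 < C) (QL QU : Matrix (Fin m) (Fin m) ℝ)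
    (hLU : ∀ i j, QL i j ≤ QU i j)
    (Qt : Matrix (Fin m) (Fin m) ℝ)
    (hQt : ∀ i j, QL i j ≤ Qt i j ∧ Qt i j ≤ QU i j)
    (α u v : Fin m → ℝ)
    (hkkt : ∀ i, 0 ≤ α i ∧ α i ≤ C ∧ 0 ≤ u i ∧ 0 ≤ v i ∧
      (∑ j, y i * y j * α j * Qt i j) - 1 - u i + v i = 0 ∧
      u i * α i = 0 ∧ v i * (C - α i) = 0) :
    ∃ s t : Fin m → ℝ, ∀ i,
      (s i = 0 ∨ s i = 1) ∧ (t i = 0 ∨ t i = 1) ∧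
      u i ≤ (((∑ j ∈ univ.filter (fun j => y i * y j = 1), C * max (QU i j) 0)
              - ∑ j ∈ univ.filter (fun j => y i * y j = -1), C * min (QL i j) 0) - 1)
            * s i ∧
      α i ≤ C * (1 - s i) ∧
      v i ≤ (1 - ((∑ j ∈ univ.filter (fun j => y i * y j = 1), C * min (QL i j) 0)
              - ∑ j ∈ univ.filter (fun j => y i * y j = -1), C * max (QU i j) 0))
            * t i ∧
      C - α i ≤ C * (1 - t i) := by
  refine ⟨fun i => if u i = 0 then 0 else 1, fun i => if v i = 0 then 0 else 1, fun i => ?_⟩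
  obtain ⟨hα0, hαC, hu0, hv0, hstat, hcs1, hcs2⟩ := hkkt i
  have hp : ∀ j, y i * y j = 1 ∨ y i * y j = -1 := fun j => by
    rcases hy i with h1 | h1 <;> rcases hy j with h2 | h2 <;> simp [h1, h2]
  have hfilter : univ.filter (fun j => ¬ y i * y j = 1)
      = univ.filter (fun j => y i * y j = -1) := by
    apply Finset.filter_congr
    intro j _
    rcases hp j with h | h <;> simp [h] <;> norm_num
  have hsplit : (∑ j, y i * y j * α j * Qt i j)
      = (∑ j ∈ univ.filter (fun j => y i * y j = 1), y i * y j * α j * Qt i j)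
        + ∑ j ∈ univ.filter (fun j => y i * y j = -1), y i * y j * α j * Qt i j := by
    rw [← hfilter, Finset.sum_filter_add_sum_filter_not]
  have hub : (∑ j, y i * y j * α j * Qt i j)
      ≤ (∑ j ∈ univ.filter (fun j => y i * y j = 1), C * max (QU i j) 0)
        - ∑ j ∈ univ.filter (fun j => y i * y j = -1), C * min (QL i j) 0 := by
    rw [hsplit, sub_eq_add_neg, ← Finset.sum_neg_distrib]
    apply add_le_add
    · refine Finset.sum_le_sum fun j hj => ?_
      rw [(Finset.mem_filter.mp hj).2]
      have := (prod_bounds (hkkt j).1 (hkkt j).2.1 (hQt i j).1 (hQt i j).2).2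
      linarith
    · refine Finset.sum_le_sum fun j hj => ?_
      rw [(Finset.mem_filter.mp hj).2]
      have := (prod_bounds (hkkt j).1 (hkkt j).2.1 (hQt i j).1 (hQt i j).2).1
      linarith
  have hlb : (∑ j ∈ univ.filter (fun j => y i * y j = 1), C * min (QL i j) 0)
        - ∑ j ∈ univ.filter (fun j => y i * y j = -1), C * max (QU i j) 0
      ≤ ∑ j, y i * y j * α j * Qt i j := by
    rw [hsplit, sub_eq_add_neg, ← Finset.sum_neg_distrib]
    apply add_le_add
    · refine Finset.sum_le_sum fun j hj => ?_
      rw [(Finset.mem_filter.mp hj).2]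
      have := (prod_bounds (hkkt j).1 (hkkt j).2.1 (hQt i j).1 (hQt i j).2).1
      linarith
    · refine Finset.sum_le_sum fun j hj => ?_
      rw [(Finset.mem_filter.mp hj).2]
      have := (prod_bounds (hkkt j).1 (hkkt j).2.1 (hQt i j).1 (hQt i j).2).2
      linarith
  by_cases hu : u i = 0 <;> by_cases hv : v i = 0 <;> simp only [hu, hv, if_pos, if_neg, if_true, if_false, ite_true, ite_false]
  · refine ⟨by tauto, by tauto, ?_, ?_, ?_, ?_⟩ <;> simp [hu, hv] <;> linarith
  · -- u i = 0, v i ≠ 0 : t = 1, need α i = C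
    have hvpos : 0 < v i := lt_of_le_of_ne hv0 (Ne.symm hv)
    have hαeq : α i = C := by
      by_contra h
      have : C - α i ≠ 0 := fun hh => h (by linarith)
      exact hv (by
        have := hcs2
        rcases mul_eq_zero.mp this with h1 | h1
        · exact h1
        · exact absurd h1 ‹C - α i ≠ 0›)
    refine ⟨by tauto, by tauto, by simp [hu], by simp [hu]; linarith, ?_, by simp [hαeq]⟩
    have : v i = 1 - (∑ j, y i * y j * α j * Qt i j) := by linarith [hstat, hu]
    rw [mul_one]
    linarith
  · -- u i ≠ 0, v i = 0 : s = 1, α i = 0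
    have hupos : 0 < u i := lt_of_le_of_ne hu0 (Ne.symm hu)
    have hαeq : α i = 0 := by
      rcases mul_eq_zero.mp hcs1 with h1 | h1
      · exact absurd h1 hu
      · exact h1
    refine ⟨by tauto, by tauto, ?_, by simp [hαeq], by simp [hv], by simp [hv]; linarith⟩
    rw [mul_one]
    linarith
  · -- both nonzero: impossible
    exfalso
    have hupos : 0 < u i := lt_of_le_of_ne hu0 (Ne.symm hu)
    have hvpos : 0 < v i := lt_of_le_of_ne hv0 (Ne.symm hv)
    have hαeq : α i = 0 := by
      rcases mul_eq_zero.mp hcs1 with h1 | h1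
      · exact absurd h1 hu
      · exact h1
    have : C - α i = 0 := by
      rcases mul_eq_zero.mp hcs2 with h1 | h1
      · exact absurd h1 hv
      · exact h1
    linarith
end

section
/- Fix σ ∈ {−1,1}, y ∈ {−1,1}^m, C > 0, and elementwise bounds Q^L_{ij} ≤ Q^U_{ij} for all i ∈ {1,…,m} ∪ {t} and j ∈ {1,…,m}, where t is a distinguished test index. Call a tuple (α, u, v, s, τ, Z), with α, u, v ∈ ℝ^m, s, τ ∈ {0,1}^m, and Z ∈ ℝ^{({1,…,m}∪{t})×m}, MILP-feasible if: Z_{ij} ≤ α_j Q^U_{ij} and Z_{ij} ≥ α_j Q^L_{ij} for all i ∈ {1,…,m} ∪ {t} and j ∈ {1,…,m}; and for all i ∈ {1,…,m}: ∑_{j=1}^m y_i y_j Z_{ij} − 1 − u_i + v_i = 0, 0 ≤ α_i ≤ C, u_i ≥ 0, v_i ≥ 0, u_i ≤ M_{u_i} s_i, α_i ≤ C(1 − s_i), v_i ≤ M_{v_i} τ_i, and C − α_i ≤ C(1 − τ_i), where M_{u_i} = UB_i − 1 and M_{v_i} = 1 − LB_i with UB_i = ∑_{j : y_i y_j = 1}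 C·max(Q^U_{ij}, 0) − ∑_{j : y_i y_j = −1} C·min(Q^L_{ij}, 0) and LB_i = ∑_{j : y_i y_j = 1} C·min(Q^L_{ij}, 0) − ∑_{j : y_i y_j = −1} C·max(Q^U_{ij}, 0). Suppose every MILP-feasible tuple satisfies σ·∑_{i=1}^m y_i Z_{ti} > 0. Then for every matrix Q̃ indexed by ({1,…,m}∪{t})×{1,…,m} with Q^L_{ij} ≤ Q̃_{ij} ≤ Q^U_{ij} for all such i, j, and every (α, u, v) satisfying the KKT system for the training block of Q̃ (i.e., 0 ≤ α_i ≤ C, u_i ≥ 0, v_i ≥ 0, ∑_{j=1}^m y_i y_j α_j Q̃_{ij} − 1 − u_i + v_i = 0, u_i α_i = 0, v_i (C − α_i) = 0 for all i ∈ {1,…,m}), it holds that σ·∑_{i=1}^m y_i α_i Q̃_{ti} > 0. -/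
open Finset

/-!
A KKT point `(α, u, v)` of the training block of an admissible kernel `Q̃` yields an
MILP-feasible tuple: take `Z_{ij} = α_j Q̃_{ij}`, `s_i = [u_i ≠ 0]` and `τ_i = [v_i ≠ 0]`.
Since `0 ≤ α ≤ C` and `Q^L ≤ Q̃ ≤ Q^U`, the stationarity sum `∑ⱼ yᵢ yⱼ αⱼ Q̃ᵢⱼ` lies in
`[LBᵢ, UBᵢ]`, and complementary slackness makes the big-M constraints hold. The MILP
objective at this tuple is exactly the prediction margin `σ ∑ᵢ yᵢ αᵢ Q̃_{ti}`.
-/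

lemma mul_le_mul_max_zero {C a Q QU : ℝ} (ha0 : 0 ≤ a) (haC : a ≤ C) (hQ : Q ≤ QU) :
    a * Q ≤ C * max QU 0 := by
  rcases le_total Q 0 with hQ0 | hQ0
  · exact (mul_nonpos_of_nonneg_of_nonpos ha0 hQ0).trans
      (mul_nonneg (ha0.trans haC) (le_max_right _ _))
  · calc a * Q ≤ C * Q := mul_le_mul_of_nonneg_right haC hQ0
      _ ≤ C * max QU 0 := mul_le_mul_of_nonneg_left (hQ.trans (le_max_left _ _)) (ha0.trans haC)

lemma mul_min_zero_le_mul {C a Q QL : ℝ} (ha0 : 0 ≤ a) (haC : a ≤ C) (hQ : QL ≤ Q) :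
    C * min QL 0 ≤ a * Q := by
  have := mul_le_mul_max_zero (Q := -Q) (QU := -QL) ha0 haC (neg_le_neg hQ)
  rw [← neg_zero, max_neg_neg] at this
  linarith

lemma sum_sign_mul_le {ι : Type*} (s : Finset ι) (w f L U : ι → ℝ)
    (hw : ∀ j ∈ s, w j = 1 ∨ w j = -1) (hL : ∀ j ∈ s, L j ≤ f j) (hU : ∀ j ∈ s, f j ≤ U j) :
    ∑ j ∈ s, w j * f j ≤ ∑ j ∈ s with w j = 1, U j - ∑ j ∈ s with w j = -1, L j := by
  rw [sum_filter, sum_filter, ← sum_sub_distrib]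
  refine sum_le_sum fun j hj => ?_
  rcases hw j hj with h | h <;> norm_num [h] <;> linarith [hL j hj, hU j hj]

lemma le_sum_sign_mul {ι : Type*} (s : Finset ι) (w f L U : ι → ℝ)
    (hw : ∀ j ∈ s, w j = 1 ∨ w j = -1) (hL : ∀ j ∈ s, L j ≤ f j) (hU : ∀ j ∈ s, f j ≤ U j) :
    ∑ j ∈ s with w j = 1, L j - ∑ j ∈ s with w j = -1, U j ≤ ∑ j ∈ s, w j * f j := by
  have := sum_sign_mul_le s w (-f) (-U) (-L) hw
    (fun j hj => neg_le_neg (hU j hj)) (fun j hj => neg_le_neg (hL j hj))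
  simp only [Pi.neg_apply, mul_neg, sum_neg_distrib] at this
  linarith

section BigM

variable {ι : Type*} [Fintype ι] {C : ℝ} {w α Q QL QU : ι → ℝ}

lemma sum_sign_mul_le_bigM (hw : ∀ j, w j = 1 ∨ w j = -1) (hα0 : ∀ j, 0 ≤ α j)
    (hαC : ∀ j, α j ≤ C) (hQL : ∀ j, QL j ≤ Q j) (hQU : ∀ j, Q j ≤ QU j) :
    ∑ j, w j * (α j * Q j) ≤
      ∑ j with w j = 1, C * max (QU j) 0 - ∑ j with w j = -1, C * min (QL j) 0 :=
  sum_sign_mul_le _ w _ _ _ (fun j _ => hw j)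
    (fun j _ => mul_min_zero_le_mul (hα0 j) (hαC j) (hQL j))
    (fun j _ => mul_le_mul_max_zero (hα0 j) (hαC j) (hQU j))

lemma bigM_le_sum_sign_mul (hw : ∀ j, w j = 1 ∨ w j = -1) (hα0 : ∀ j, 0 ≤ α j)
    (hαC : ∀ j, α j ≤ C) (hQL : ∀ j, QL j ≤ Q j) (hQU : ∀ j, Q j ≤ QU j) :
    ∑ j with w j = 1, C * min (QL j) 0 - ∑ j with w j = -1, C * max (QU j) 0 ≤
      ∑ j, w j * (α j * Q j) :=
  le_sum_sign_mul _ w _ _ _ (fun j _ => hw j)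
    (fun j _ => mul_min_zero_le_mul (hα0 j) (hαC j) (hQL j))
    (fun j _ => mul_le_mul_max_zero (hα0 j) (hαC j) (hQU j))

end BigM

section Complementarity

variable {C a u v g LB UB : ℝ}

lemma lower_bigM_of_complementary (hC : 0 < C) (haC : a ≤ C) (hstat : g - 1 - u + v = 0)
    (hua : u * a = 0) (hva : v * (C - a) = 0) (hUB : g ≤ UB) :
    u ≤ (UB - 1) * (if u = 0 then 0 else 1) ∧ a ≤ C * (1 - if u = 0 then 0 else 1) := by
  by_cases hu : u = 0
  · simp only [hu, if_true, mul_zero, sub_zero, mul_one, le_refl, true_and]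
    linarith
  · have ha : a = 0 := (mul_eq_zero.mp hua).resolve_left hu
    have hv : v = 0 := by simpa [ha, hC.ne'] using hva
    simp only [hu, if_false, mul_one, sub_self, mul_zero, ha, le_refl, and_true]
    linarith

lemma upper_bigM_of_complementary (hC : 0 < C) (ha0 : 0 ≤ a) (hstat : g - 1 - u + v = 0)
    (hua : u * a = 0) (hva : v * (C - a) = 0) (hLB : LB ≤ g) :
    v ≤ (1 - LB) * (if v = 0 then 0 else 1) ∧ C - a ≤ C * (1 - if v = 0 then 0 else 1) := by
  by_cases hv : v = 0
  · simp only [hv, if_true, mul_zero, sub_zero, mul_one, le_refl, true_and]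
    linarith
  · have ha : a = C := (sub_eq_zero.mp ((mul_eq_zero.mp hva).resolve_left hv)).symm
    have hu : u = 0 := by simpa [ha, hC.ne'] using hua
    simp only [hv, if_false, mul_one, sub_self, mul_zero, ha, le_refl, and_true]
    linarith

end Complementarity

/-- Indices `{1,…,m} ∪ {t}` are modeled by `Option (Fin m)`, with `none` playing the
role of the test index `t`. -/
theorem milp_certificate_sound_general {m : ℕ} (σ : ℝ)
    (y : Fin m → ℝ) (hy : ∀ i, y i = 1 ∨ y i = -1)
    (C : ℝ) (hC : 0 < C)
    (QL QU : Option (Fin m) → Fin m → ℝ)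
    (hmilp : ∀ (α u v s τ : Fin m → ℝ) (Z : Option (Fin m) → Fin m → ℝ),
      (∀ i, s i = 0 ∨ s i = 1) →
      (∀ i, τ i = 0 ∨ τ i = 1) →
      (∀ (i : Option (Fin m)) (j : Fin m),
        Z i j ≤ α j * QU i j ∧ α j * QL i j ≤ Z i j) →
      (∀ i : Fin m,
        (∑ j, y i * y j * Z (some i) j) - 1 - u i + v i = 0 ∧
        0 ≤ α i ∧ α i ≤ C ∧ 0 ≤ u i ∧ 0 ≤ v i ∧
        u i ≤ (((∑ j ∈ univ.filter (fun j => y i * y j = 1),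
                    C * max (QU (some i) j) 0)
                - ∑ j ∈ univ.filter (fun j => y i * y j = -1),
                    C * min (QL (some i) j) 0) - 1) * s i ∧
        α i ≤ C * (1 - s i) ∧
        v i ≤ (1 - ((∑ j ∈ univ.filter (fun j => y i * y j = 1),
                    C * min (QL (some i) j) 0)
                - ∑ j ∈ univ.filter (fun j => y i * y j = -1),
                    C * max (QU (some i) j) 0)) * τ i ∧
        C - α i ≤ C * (1 - τ i)) →
      0 < σ * ∑ i, y i * Z none i) :
    ∀ (Qt : Option (Fin m) → Fin m → ℝ),
      (∀ i j, QL i j ≤ Qt i j ∧ Qt i j ≤ QU i j) →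
      ∀ α u v : Fin m → ℝ,
        (∀ i : Fin m, 0 ≤ α i ∧ α i ≤ C ∧ 0 ≤ u i ∧ 0 ≤ v i ∧
          (∑ j, y i * y j * α j * Qt (some i) j) - 1 - u i + v i = 0 ∧
          u i * α i = 0 ∧ v i * (C - α i) = 0) →
        0 < σ * ∑ i, y i * α i * Qt none i := by
  intro Qt hQ α u v hkkt
  have hyy : ∀ i j, y i * y j = 1 ∨ y i * y j = -1 := fun i j => by
    rcases hy i with hi | hi <;> rcases hy j with hj | hj <;> norm_num [hi, hj]
  have hstat : ∀ i,
      ∑ j, y i * y j * (α j * Qt (some i) j) = ∑ j, y i * y j * α j * Qt (some i) j :=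
    fun i => sum_congr rfl fun j _ => (mul_assoc _ _ _).symm
  have hmargin : ∑ i, y i * α i * Qt none i = ∑ i, y i * (α i * Qt none i) :=
    sum_congr rfl fun i _ => mul_assoc _ _ _
  rw [hmargin]
  refine hmilp α u v
    (fun i => if u i = 0 then 0 else 1) (fun i => if v i = 0 then 0 else 1)
    (fun i j => α j * Qt i j) (fun i => by split <;> simp) (fun i => by split <;> simp)
    (fun i j => ⟨mul_le_mul_of_nonneg_left (hQ i j).2 (hkkt j).1,
      mul_le_mul_of_nonneg_left (hQ i j).1 (hkkt j).1⟩) fun i => ?_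
  obtain ⟨hα0, hαC, hu0, hv0, hsum, hua, hva⟩ := hkkt i
  rw [← hstat i] at hsum
  have hUB := sum_sign_mul_le_bigM (hyy i) (fun j => (hkkt j).1) (fun j => (hkkt j).2.1)
    (fun j => (hQ (some i) j).1) (fun j => (hQ (some i) j).2)
  have hLB := bigM_le_sum_sign_mul (hyy i) (fun j => (hkkt j).1) (fun j => (hkkt j).2.1)
    (fun j => (hQ (some i) j).1) (fun j => (hQ (some i) j).2)
  obtain ⟨hu, hs⟩ := lower_bigM_of_complementary hC hαC hsum hua hva hUB
  obtain ⟨hv, hτ⟩ := upper_bigM_of_complementary hC hα0 hsum hua hva hLB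
  exact ⟨hsum, hα0, hαC, hu0, hv0, hu, hs, hv, hτ⟩

/-- **Soundness of the MILP certificate (Theorem 1, QPCert).**
Indices `{1,…,m} ∪ {t}` are modeled by `Option (Fin m)`, with `none` playing the
role of the test index `t`. If every MILP-feasible tuple `(α, u, v, s, τ, Z)` has
objective `σ·∑ᵢ yᵢ Z_{t i} > 0`, then for every kernel matrix `Q̃` within the
elementwise bounds and every KKT point `(α, u, v)` of its training block, the
prediction margin satisfies `σ·∑ᵢ yᵢ αᵢ Q̃_{t i} > 0`. -/
theorem milp_certificate_sound {m : ℕ} (σ : ℝ) (hσ : σ = 1 ∨ σ = -1)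
    (y : Fin m → ℝ) (hy : ∀ i, y i = 1 ∨ y i = -1)
    (C : ℝ) (hC : 0 < C)
    (QL QU : Option (Fin m) → Fin m → ℝ)
    (hLU : ∀ i j, QL i j ≤ QU i j)
    (hmilp : ∀ (α u v s τ : Fin m → ℝ) (Z : Option (Fin m) → Fin m → ℝ),
      (∀ i, s i = 0 ∨ s i = 1) →
      (∀ i, τ i = 0 ∨ τ i = 1) →
      (∀ (i : Option (Fin m)) (j : Fin m),
        Z i j ≤ α j * QU i j ∧ α j * QL i j ≤ Z i j) →
      (∀ i : Fin m,
        (∑ j, y i * y j * Z (some i) j) - 1 - u i + v i = 0 ∧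
        0 ≤ α i ∧ α i ≤ C ∧ 0 ≤ u i ∧ 0 ≤ v i ∧
        u i ≤ (((∑ j ∈ univ.filter (fun j => y i * y j = 1),
                    C * max (QU (some i) j) 0)
                - ∑ j ∈ univ.filter (fun j => y i * y j = -1),
                    C * min (QL (some i) j) 0) - 1) * s i ∧
        α i ≤ C * (1 - s i) ∧
        v i ≤ (1 - ((∑ j ∈ univ.filter (fun j => y i * y j = 1),
                    C * min (QL (some i) j) 0)
                - ∑ j ∈ univ.filter (fun j => y i * y j = -1),
                    C * max (QU (some i) j) 0)) * τ i ∧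
        C - α i ≤ C * (1 - τ i)) →
      0 < σ * ∑ i, y i * Z none i) :
    ∀ (Qt : Option (Fin m) → Fin m → ℝ),
      (∀ i j, QL i j ≤ Qt i j ∧ Qt i j ≤ QU i j) →
      ∀ α u v : Fin m → ℝ,
        (∀ i : Fin m, 0 ≤ α i ∧ α i ≤ C ∧ 0 ≤ u i ∧ 0 ≤ v i ∧
          (∑ j, y i * y j * α j * Qt (some i) j) - 1 - u i + v i = 0 ∧
          u i * α i = 0 ∧ v i * (C - α i) = 0) →
        0 < σ * ∑ i, y i * α i * Qt none i :=
  milp_certificate_sound_general σ y hy C hC QL QU hmilp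
end

section
/- Let M ∈ ℝ^{n×n} have all entries nonnegative, let Γ ∈ ℝ^{n×d} be an admissible ℓ∞-perturbation of X with budget δ and adversarial node set U, and let X̃ = X + Γ. Then for all i, j ∈ {1,…,n}: (M (XXᵀ + Δ^L) Mᵀ)_{ij} ≤ (M X̃X̃ᵀ Mᵀ)_{ij} ≤ (M (XXᵀ + Δ^U) Mᵀ)_{ij}, where Δ^L_{ij} = −δ‖X_j‖₁·1[i∈U] − δ‖X_i‖₁·1[j∈U] − δ²d·1[i∈U ∧ j∈U ∧ i≠j] and Δ^U_{ij} = δ‖X_j‖₁·1[i∈U] + δ‖X_i‖₁·1[j∈U] + δ²d·1[i∈U ∧ j∈U]. -/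
open Finset Matrix

lemma mmul_mono {n : ℕ} (M : Matrix (Fin n) (Fin n) ℝ) (hM : ∀ i j, 0 ≤ M i j)
    (A B : Matrix (Fin n) (Fin n) ℝ) (h : ∀ a b, A a b ≤ B a b) (i j : Fin n) :
    (M * A * Mᵀ) i j ≤ (M * B * Mᵀ) i j := by
  simp only [Matrix.mul_apply, Matrix.transpose_apply]
  refine Finset.sum_le_sum fun b _ => ?_
  refine mul_le_mul_of_nonneg_right ?_ (hM j b)
  exact Finset.sum_le_sum fun a _ => mul_le_mul_of_nonneg_left (h a b) (hM i a)

/-- **Propagated NTK bounds for a linear GNN, ℓ∞ case.**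
If `M` has nonnegative entries and `Γ` is an admissible ℓ∞-perturbation of `X`
with budget `δ` and adversarial set `U`, then the perturbed matrix
`M(X̃X̃ᵀ)Mᵀ` lies elementwise between `M(XXᵀ + Δᴸ)Mᵀ` and `M(XXᵀ + Δᵁ)Mᵀ`. -/
theorem ntk_bounds_linear_gnn_linf {n d : ℕ}
    (M : Matrix (Fin n) (Fin n) ℝ) (hM : ∀ i j, 0 ≤ M i j)
    (X Γ : Matrix (Fin n) (Fin d) ℝ)
    (U : Finset (Fin n)) (δ : ℝ) (hδ : 0 ≤ δ)
    (hG0 : ∀ i, i ∉ U → Γ i = 0)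
    (hGinf : ∀ i ∈ U, ∀ p, |Γ i p| ≤ δ)
    (ΔL ΔU : Matrix (Fin n) (Fin n) ℝ)
    (hΔL : ∀ i j, ΔL i j =
      -(δ * ∑ p, |X j p|) * (if i ∈ U then 1 else 0)
      - δ * (∑ p, |X i p|) * (if j ∈ U then 1 else 0)
      - δ ^ 2 * d * (if i ∈ U ∧ j ∈ U ∧ i ≠ j then 1 else 0))
    (hΔU : ∀ i j, ΔU i j =
      δ * (∑ p, |X j p|) * (if i ∈ U then 1 else 0)
      + δ * (∑ p, |X i p|) * (if j ∈ U then 1 else 0)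
      + δ ^ 2 * d * (if i ∈ U ∧ j ∈ U then 1 else 0)) :
    ∀ i j : Fin n,
      (M * (X * Xᵀ + ΔL) * Mᵀ) i j ≤ (M * ((X + Γ) * (X + Γ)ᵀ) * Mᵀ) i j
      ∧ (M * ((X + Γ) * (X + Γ)ᵀ) * Mᵀ) i j ≤ (M * (X * Xᵀ + ΔU) * Mᵀ) i j := by
  -- entrywise bounds on the inner matrix
  have key : ∀ a b : Fin n,
      (X * Xᵀ + ΔL) a b ≤ ((X + Γ) * (X + Γ)ᵀ) a b
      ∧ ((X + Γ) * (X + Γ)ᵀ) a b ≤ (X * Xᵀ + ΔU) a b := by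
    intro a b
    set S1 : ℝ := ∑ p, X a p * Γ b p with hS1def
    set S2 : ℝ := ∑ p, Γ a p * X b p with hS2def
    set S3 : ℝ := ∑ p, Γ a p * Γ b p with hS3def
    have hexp : ((X + Γ) * (X + Γ)ᵀ) a b = (X * Xᵀ) a b + S1 + S2 + S3 := by
      simp only [Matrix.mul_apply, Matrix.transpose_apply, Matrix.add_apply,
        hS1def, hS2def, hS3def, ← Finset.sum_add_distrib]
      exact Finset.sum_congr rfl fun p _ => by ring
    have hS1 : |S1| ≤ δ * (∑ p, |X a p|) * (if b ∈ U then 1 else 0) := by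
      by_cases hb : b ∈ U
      · simp only [hb, if_true, mul_one]
        calc |S1| ≤ ∑ p, |X a p * Γ b p| := Finset.abs_sum_le_sum_abs _ _
          _ ≤ ∑ p, |X a p| * δ := Finset.sum_le_sum fun p _ => by
              rw [abs_mul]
              exact mul_le_mul_of_nonneg_left (hGinf b hb p) (abs_nonneg _)
          _ = δ * ∑ p, |X a p| := by rw [← Finset.sum_mul]; ring
      · simp [hS1def, hG0 b hb, hb]
    have hS2 : |S2| ≤ δ * (∑ p, |X b p|) * (if a ∈ U then 1 else 0) := by
      by_cases ha : a ∈ U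
      · simp only [ha, if_true, mul_one]
        calc |S2| ≤ ∑ p, |Γ a p * X b p| := Finset.abs_sum_le_sum_abs _ _
          _ ≤ ∑ p, δ * |X b p| := Finset.sum_le_sum fun p _ => by
              rw [abs_mul]
              exact mul_le_mul_of_nonneg_right (hGinf a ha p) (abs_nonneg _)
          _ = δ * ∑ p, |X b p| := by rw [← Finset.mul_sum]
      · simp [hS2def, hG0 a ha, ha]
    have hS3abs : a ∈ U → b ∈ U → |S3| ≤ δ ^ 2 * d := by
      intro ha hb
      calc |S3| ≤ ∑ p, |Γ a p * Γ b p| := Finset.abs_sum_le_sum_abs _ _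
        _ ≤ ∑ _p : Fin d, δ * δ := Finset.sum_le_sum fun p _ => by
            rw [abs_mul]
            exact mul_le_mul (hGinf a ha p) (hGinf b hb p) (abs_nonneg _) hδ
        _ = δ ^ 2 * d := by simp [Finset.sum_const]; ring
    have hS3u : S3 ≤ δ ^ 2 * d * (if a ∈ U ∧ b ∈ U then 1 else 0) := by
      by_cases ha : a ∈ U
      · by_cases hb : b ∈ U
        · simpa [ha, hb] using (abs_le.mp (hS3abs ha hb)).2
        · simp [hS3def, hG0 b hb, ha, hb]
      · simp [hS3def, hG0 a ha, ha]
    have hS3l : -(δ ^ 2 * d * (if a ∈ U ∧ b ∈ U ∧ a ≠ b then 1 else 0)) ≤ S3 := by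
      by_cases hab : a = b
      · subst hab
        simp only [ne_eq, not_true_eq_false, and_false, if_false, mul_zero, neg_zero]
        exact Finset.sum_nonneg fun p _ => mul_self_nonneg _
      · by_cases ha : a ∈ U
        · by_cases hb : b ∈ U
          · have := (abs_le.mp (hS3abs ha hb)).1
            simpa [ha, hb, hab] using this
          · simp [hS3def, hG0 b hb, ha, hb]
        · simp [hS3def, hG0 a ha, ha]
    have h1 := abs_le.mp hS1
    have h2 := abs_le.mp hS2
    constructor
    · rw [hexp, Matrix.add_apply, hΔL a b]
      have := h1.1; have := h2.1
      nlinarith [hS3l]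
    · rw [hexp, Matrix.add_apply, hΔU a b]
      nlinarith [h1.2, h2.2, hS3u]
  intro i j
  exact ⟨mmul_mono M hM _ _ (fun a b => (key a b).1) i j,
         mmul_mono M hM _ _ (fun a b => (key a b).2) i j⟩
end

section
/- Assume every entry of X ∈ ℝ^{n×d} is nonnegative, let U ⊆ {1,…,n} and δ ≥ 0, and define Γ ∈ ℝ^{n×d} by Γ_i = δ·(1,…,1) for i ∈ U and Γ_i = 0 for i ∉ U. Then Γ is an admissible ℓ∞-perturbation of X with budget δ and adversarial node set U, and with X̃ = X + Γ one has (X̃X̃ᵀ)_{ij} = (XXᵀ)_{ij} + Δ^U_{ij} for ALL i, j ∈ {1,…,n}, where Δ^U_{ij} = δ‖X_j‖₁·1[i∈U] + δ‖X_i‖₁·1[j∈U] + δ²d·1[i∈U ∧ j∈U]. Consequently, for every M ∈ ℝ^{n×n} with nonnegative entries, M X̃X̃ᵀ Mᵀ = M (XXᵀ + Δ^U) Mᵀ, i.e., the worst-case upper bound on the NTK of a linear graph neural network is attained exactly. -/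
open Finset Matrix

/-- **Tightness of the ℓ∞ upper bound for nonnegative features.**
For nonnegative `X`, the perturbation `Γ` with `Γ i = δ·(1,…,1)` on `U` and `0`
elsewhere is an admissible ℓ∞-perturbation, attains the worst-case upper bound
`Δᵁ` on the Gram matrix at *every* entry, and hence the worst-case upper bound on
the NTK `M(XXᵀ + Δᵁ)Mᵀ` of a linear GNN is attained exactly for every nonnegative
diffusion matrix `M`. -/
theorem linf_upper_bound_tight {n d : ℕ}
    (X : Matrix (Fin n) (Fin d) ℝ) (hX : ∀ i p, 0 ≤ X i p)
    (U : Finset (Fin n)) (δ : ℝ) (hδ : 0 ≤ δ)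
    (Γ : Matrix (Fin n) (Fin d) ℝ)
    (hΓ : ∀ i p, Γ i p = if i ∈ U then δ else 0)
    (ΔU : Matrix (Fin n) (Fin n) ℝ)
    (hΔU : ∀ i j, ΔU i j =
      δ * (∑ p, |X j p|) * (if i ∈ U then 1 else 0)
      + δ * (∑ p, |X i p|) * (if j ∈ U then 1 else 0)
      + δ ^ 2 * d * (if i ∈ U ∧ j ∈ U then 1 else 0)) :
    ((∀ i, i ∉ U → Γ i = 0) ∧ (∀ i ∈ U, ∀ p, |Γ i p| ≤ δ))
    ∧ (∀ i j : Fin n, ((X + Γ) * (X + Γ)ᵀ) i j = (X * Xᵀ) i j + ΔU i j)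
    ∧ (∀ M : Matrix (Fin n) (Fin n) ℝ, (∀ i j, 0 ≤ M i j) →
        M * ((X + Γ) * (X + Γ)ᵀ) * Mᵀ = M * (X * Xᵀ + ΔU) * Mᵀ) := by
  have key : ∀ i j : Fin n, ((X + Γ) * (X + Γ)ᵀ) i j = (X * Xᵀ) i j + ΔU i j := by
    intro i j
    simp only [Matrix.mul_apply, Matrix.add_apply, Matrix.transpose_apply, hΔU]
    have habs : ∀ k : Fin n, (∑ p, |X k p|) = ∑ p, X k p := by
      intro k; exact Finset.sum_congr rfl fun p _ => abs_of_nonneg (hX k p)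
    rw [habs, habs]
    have expand : ∀ p : Fin d,
        (X i p + Γ i p) * (X j p + Γ j p)
          = X i p * X j p
            + δ * X j p * (if i ∈ U then 1 else 0)
            + δ * X i p * (if j ∈ U then 1 else 0)
            + δ ^ 2 * (if i ∈ U ∧ j ∈ U then 1 else 0) := by
      intro p
      rw [hΓ, hΓ]
      by_cases hi : i ∈ U <;> by_cases hj : j ∈ U <;>
        simp [hi, hj] <;> ring
    rw [Finset.sum_congr rfl fun p _ => expand p]
    simp only [Finset.sum_add_distrib, ← Finset.mul_sum, ← Finset.sum_mul,
      Finset.sum_const, Finset.card_univ, Fintype.card_fin, nsmul_eq_mul]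
    ring
  refine ⟨⟨fun i hi => funext fun p => by simp [hΓ, hi],
    fun i hi p => by simp [hΓ, hi, abs_of_nonneg hδ]⟩, key, fun M _ => ?_⟩
  have hmat : (X + Γ) * (X + Γ)ᵀ = X * Xᵀ + ΔU := by
    ext i j; rw [key, Matrix.add_apply]
  rw [hmat]
end

section
/- Let X ∈ ℝ^{n×d}, let i ≠ j with i, j ∈ U, suppose every entry of the row X_i is nonnegative and every entry of the row X_j is nonpositive, and let δ ≥ 0. Define Γ ∈ ℝ^{n×d} by Γ_i = δ·(1,…,1), Γ_j = −δ·(1,…,1), and Γ_k = 0 for k ∉ {i,j}. Then Γ is an admissible ℓ∞-perturbation of X with budget δ and adversarial node set U, and with X̃ = X + Γ one has (X̃X̃ᵀ)_{ij} = (XXᵀ)_{ij} − δ‖X_j‖₁ − δ‖X_i‖₁ − δ²d, i.e., the worst-case lower bound Δ^L_{ij} for a pair of adversarial nodes is attained exactly. -/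
open Finset Matrix

/-- **Tightness of the ℓ∞ lower bound for a pair of adversarial nodes.**
If `i ≠ j` are adversarial, row `X i` is nonnegative and row `X j` is nonpositive,
then the perturbation `Γ` with `Γ i = δ·(1,…,1)`, `Γ j = −δ·(1,…,1)` and `0`
elsewhere is an admissible ℓ∞-perturbation attaining the worst-case lower bound
`Δᴸ_{ij} = −δ‖X_j‖₁ − δ‖X_i‖₁ − δ²d` exactly. -/
theorem linf_lower_bound_tight {n d : ℕ}
    (X : Matrix (Fin n) (Fin d) ℝ)
    (U : Finset (Fin n)) (i j : Fin n) (hij : i ≠ j)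
    (hiU : i ∈ U) (hjU : j ∈ U)
    (hXi : ∀ p, 0 ≤ X i p) (hXj : ∀ p, X j p ≤ 0)
    (δ : ℝ) (hδ : 0 ≤ δ)
    (Γ : Matrix (Fin n) (Fin d) ℝ)
    (hΓi : ∀ p, Γ i p = δ) (hΓj : ∀ p, Γ j p = -δ)
    (hΓ0 : ∀ k, k ≠ i → k ≠ j → Γ k = 0) :
    ((∀ k, k ∉ U → Γ k = 0) ∧ (∀ k ∈ U, ∀ p, |Γ k p| ≤ δ))
    ∧ ((X + Γ) * (X + Γ)ᵀ) i j
        = (X * Xᵀ) i j - δ * (∑ p, |X j p|) - δ * (∑ p, |X i p|) - δ ^ 2 * d := by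
  constructor
  · constructor
    · intro k hk
      exact hΓ0 k (fun h => hk (h ▸ hiU)) (fun h => hk (h ▸ hjU))
    · intro k _ p
      rcases eq_or_ne k i with rfl | hki
      · rw [hΓi]; rw [abs_of_nonneg hδ]
      rcases eq_or_ne k j with rfl | hkj
      · rw [hΓj]; rw [abs_neg, abs_of_nonneg hδ]
      · rw [hΓ0 k hki hkj]; simpa using hδ
  · have h1 : ∀ p, |X j p| = -X j p := fun p => abs_of_nonpos (hXj p)
    have h2 : ∀ p, |X i p| = X i p := fun p => abs_of_nonneg (hXi p)
    simp only [Matrix.mul_apply, Matrix.transpose_apply, Matrix.add_apply, hΓi, hΓj, h1, h2]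
    rw [Finset.sum_congr rfl (fun p _ => by ring : ∀ p ∈ Finset.univ, (X i p + δ) * (X j p + -δ) = X i p * X j p + (δ * X j p - δ * X i p - δ^2))]
    rw [Finset.sum_add_distrib]
    simp [Finset.sum_sub_distrib, Finset.mul_sum, Finset.sum_neg_distrib]
    ring
end

section
/- Let X ∈ ℝ^{n×d}, let i ≠ j with i ∈ {1,…,n}, suppose the row X_j is nonzero, let δ ≥ 0 and η ∈ {−1,1}. Define Γ ∈ ℝ^{n×d} by Γ_i = η·δ·X_j/‖X_j‖₂ and Γ_k = 0 for k ≠ i. Then Γ is an admissible ℓ2-perturbation of X with budget δ and adversarial node set U = {i}, and with X̃ = X + Γ one has (X̃X̃ᵀ)_{ij} = (XXᵀ)_{ij} + η·δ‖X_j‖₂. In particular, for η = 1 the worst-case upper bound Δ^U_{ij} = δ‖X_j‖₂ and for η = −1 the worst-case lower bound Δ^L_{ij} = −δ‖X_j‖₂ are attained exactly. -/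
open Finset Matrix

/-! Only row `i` of `Γ` is nonzero and `j ≠ i`, so the Gram entry `(i, j)` changes by exactly
`⟨Γ_i, X_j⟩`. For `Γ_i = c · X_j / ‖X_j‖` this inner product is `c ‖X_j‖` and `‖Γ_i‖ ≤ |c|`;
with `c = η δ` and `η = ±1` this gives both the admissibility and the attained value. -/

theorem add_mul_transpose_add_apply_of_row_eq_zero {m ι α : Type*} [Fintype ι]
    [NonUnitalNonAssocSemiring α] (X Γ : Matrix m ι α) (i : m) {j : m} (hΓj : Γ j = 0) :
    ((X + Γ) * (X + Γ)ᵀ) i j = (X * Xᵀ) i j + Γ i ⬝ᵥ X j := by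
  simp only [mul_apply, transpose_apply, Matrix.add_apply, hΓj, Pi.zero_apply, add_zero, add_mul,
    dotProduct]
  exact sum_add_distrib

section Normalize

variable {ι : Type*} [Fintype ι] (c : ℝ) (v : ι → ℝ)

theorem sqrt_sum_sq_mul_div_sqrt_sum_sq_le :
    √(∑ p, (c * v p / √(∑ q, v q ^ 2)) ^ 2) ≤ |c| := by
  have hS : 0 ≤ ∑ q, v q ^ 2 := sum_nonneg fun q _ => sq_nonneg (v q)
  have hsum : ∑ p, (c * v p / √(∑ q, v q ^ 2)) ^ 2
      = c ^ 2 * ((∑ q, v q ^ 2) / ∑ q, v q ^ 2) := by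
    simp only [div_pow, mul_pow, Real.sq_sqrt hS, ← sum_div, ← mul_sum, mul_div_assoc]
  calc √(∑ p, (c * v p / √(∑ q, v q ^ 2)) ^ 2)
      ≤ √(c ^ 2) := Real.sqrt_le_sqrt <| by
        rw [hsum]
        exact mul_le_of_le_one_right (sq_nonneg c) (div_self_le_one _)
    _ = |c| := Real.sqrt_sq_eq_abs c

theorem mul_div_sqrt_sum_sq_dotProduct_self :
    (fun p => c * v p / √(∑ q, v q ^ 2)) ⬝ᵥ v = c * √(∑ q, v q ^ 2) := by
  have hS : 0 ≤ ∑ q, v q ^ 2 := sum_nonneg fun q _ => sq_nonneg (v q)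
  calc (fun p => c * v p / √(∑ q, v q ^ 2)) ⬝ᵥ v
      = c * ((√(∑ q, v q ^ 2) * √(∑ q, v q ^ 2)) / √(∑ q, v q ^ 2)) := by
        rw [Real.mul_self_sqrt hS, dotProduct, sum_div, mul_sum]
        exact sum_congr rfl fun p _ => by ring
    _ = c * √(∑ q, v q ^ 2) := by rw [mul_self_div_self]

end Normalize

theorem l2_single_node_bounds_tight_general {n d : ℕ}
    (X : Matrix (Fin n) (Fin d) ℝ)
    (i j : Fin n) (hij : i ≠ j)
    (δ : ℝ) (hδ : 0 ≤ δ) (η : ℝ) (hη : η = 1 ∨ η = -1)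
    (Γ : Matrix (Fin n) (Fin d) ℝ)
    (hΓi : ∀ p, Γ i p = η * δ * X j p / Real.sqrt (∑ q, (X j q) ^ 2))
    (hΓ0 : ∀ k, k ≠ i → Γ k = 0) :
    ((∀ k, k ∉ ({i} : Finset (Fin n)) → Γ k = 0)
      ∧ (∀ k ∈ ({i} : Finset (Fin n)), Real.sqrt (∑ p, (Γ k p) ^ 2) ≤ δ))
    ∧ ((X + Γ) * (X + Γ)ᵀ) i j
        = (X * Xᵀ) i j + η * δ * Real.sqrt (∑ q, (X j q) ^ 2) := by
  have hΓrow : Γ i = fun p => η * δ * X j p / √(∑ q, X j q ^ 2) := funext hΓi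
  have hηδ : |η * δ| = δ := by
    rcases hη with rfl | rfl <;> simp [abs_of_nonneg hδ]
  refine ⟨⟨fun k hk => hΓ0 k (Finset.notMem_singleton.1 hk), fun k hk => ?_⟩, ?_⟩
  · obtain rfl : k = i := Finset.mem_singleton.1 hk
    rw [hΓrow]
    exact (sqrt_sum_sq_mul_div_sqrt_sum_sq_le (η * δ) (X j)).trans_eq hηδ
  · rw [add_mul_transpose_add_apply_of_row_eq_zero X Γ i (hΓ0 j hij.symm), hΓrow,
      mul_div_sqrt_sum_sq_dotProduct_self]

/-- **Tightness of the ℓ2 bounds for a single adversarial node.**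
For `i ≠ j`, a nonzero row `X j`, `δ ≥ 0` and a sign `η ∈ {−1,1}`, the perturbation
`Γ` with `Γ i = η·δ·X_j/‖X_j‖₂` and zero elsewhere is an admissible
ℓ2-perturbation with adversarial set `U = {i}`, and it attains
`(X̃X̃ᵀ)_{ij} = (XXᵀ)_{ij} + η·δ‖X_j‖₂`; for `η = 1` this is the worst-case upper
bound `δ‖X_j‖₂` and for `η = −1` the worst-case lower bound `−δ‖X_j‖₂`. -/
theorem l2_single_node_bounds_tight {n d : ℕ}
    (X : Matrix (Fin n) (Fin d) ℝ)
    (i j : Fin n) (hij : i ≠ j)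
    (hXj : X j ≠ 0)
    (δ : ℝ) (hδ : 0 ≤ δ) (η : ℝ) (hη : η = 1 ∨ η = -1)
    (Γ : Matrix (Fin n) (Fin d) ℝ)
    (hΓi : ∀ p, Γ i p = η * δ * X j p / Real.sqrt (∑ q, (X j q) ^ 2))
    (hΓ0 : ∀ k, k ≠ i → Γ k = 0) :
    ((∀ k, k ∉ ({i} : Finset (Fin n)) → Γ k = 0)
      ∧ (∀ k ∈ ({i} : Finset (Fin n)), Real.sqrt (∑ p, (Γ k p) ^ 2) ≤ δ))
    ∧ ((X + Γ) * (X + Γ)ᵀ) i j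
        = (X * Xᵀ) i j + η * δ * Real.sqrt (∑ q, (X j q) ^ 2) :=
  l2_single_node_bounds_tight_general X i j hij δ hδ η hη Γ hΓi hΓ0
end

section
/- Let X ∈ ℝ^{n×d}, let i ≠ j with i, j ∈ U, let δ ≥ 0, and suppose the rows X_i and X_j are nonzero and positively parallel, i.e., X_j = c·X_i for some c > 0. Define Γ ∈ ℝ^{n×d} by Γ_i = δ·X_j/‖X_j‖₂, Γ_j = δ·X_i/‖X_i‖₂, and Γ_k = 0 for k ∉ {i,j}. Then Γ is an admissible ℓ2-perturbation of X with budget δ and adversarial node set U, and with X̃ = X + Γ one has (X̃X̃ᵀ)_{ij} = (XXᵀ)_{ij} + δ‖X_j‖₂ + δ‖X_i‖₂ + δ², i.e., the worst-case upper bound Δ^U_{ij} for a pair of adversarial nodes is attained exactly. -/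
open Finset Matrix

private lemma sqrt_scaled {d : ℕ} (x : Fin d → ℝ) (δ : ℝ) (hδ : 0 ≤ δ)
    (hS : 0 < ∑ q, (x q) ^ 2) :
    Real.sqrt (∑ p, (δ * x p / Real.sqrt (∑ q, (x q) ^ 2)) ^ 2) = δ := by
  set S := ∑ q, (x q) ^ 2 with hSdef
  have hN : 0 < Real.sqrt S := Real.sqrt_pos.2 hS
  have : (∑ p, (δ * x p / Real.sqrt S) ^ 2) = (δ / Real.sqrt S) ^ 2 * S := by
    rw [hSdef, Finset.mul_sum]
    exact Finset.sum_congr rfl (fun p _ => by ring)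
  rw [this, Real.sqrt_mul (sq_nonneg _), Real.sqrt_sq (by positivity)]
  field_simp

/-- **Tightness of the ℓ2 upper bound for a pair of adversarial nodes.**
If `i ≠ j` are adversarial and the nonzero rows `X i`, `X j` are positively
parallel (`X j = c·X i`, `c > 0`), then the perturbation `Γ` with
`Γ i = δ·X_j/‖X_j‖₂`, `Γ j = δ·X_i/‖X_i‖₂` and zero elsewhere is an admissible
ℓ2-perturbation attaining the worst-case upper bound
`Δᵁ_{ij} = δ‖X_j‖₂ + δ‖X_i‖₂ + δ²` exactly. -/
theorem l2_pair_upper_bound_tight {n d : ℕ}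
    (X : Matrix (Fin n) (Fin d) ℝ)
    (U : Finset (Fin n)) (i j : Fin n) (hij : i ≠ j)
    (hiU : i ∈ U) (hjU : j ∈ U)
    (hXi : X i ≠ 0) (hXj : X j ≠ 0)
    (c : ℝ) (hc : 0 < c) (hpar : X j = c • X i)
    (δ : ℝ) (hδ : 0 ≤ δ)
    (Γ : Matrix (Fin n) (Fin d) ℝ)
    (hΓi : ∀ p, Γ i p = δ * X j p / Real.sqrt (∑ q, (X j q) ^ 2))
    (hΓj : ∀ p, Γ j p = δ * X i p / Real.sqrt (∑ q, (X i q) ^ 2))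
    (hΓ0 : ∀ k, k ≠ i → k ≠ j → Γ k = 0) :
    ((∀ k, k ∉ U → Γ k = 0) ∧ (∀ k ∈ U, Real.sqrt (∑ p, (Γ k p) ^ 2) ≤ δ))
    ∧ ((X + Γ) * (X + Γ)ᵀ) i j
        = (X * Xᵀ) i j + δ * Real.sqrt (∑ q, (X j q) ^ 2)
          + δ * Real.sqrt (∑ q, (X i q) ^ 2) + δ ^ 2 := by
  -- positivity of the squared norms
  have hSi : 0 < ∑ q, (X i q) ^ 2 := by
    obtain ⟨q, hq⟩ := Function.ne_iff.1 hXi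
    exact Finset.sum_pos' (fun p _ => sq_nonneg _) ⟨q, Finset.mem_univ q, pow_two_pos_of_ne_zero hq⟩
  have hSj : 0 < ∑ q, (X j q) ^ 2 := by
    obtain ⟨q, hq⟩ := Function.ne_iff.1 hXj
    exact Finset.sum_pos' (fun p _ => sq_nonneg _) ⟨q, Finset.mem_univ q, pow_two_pos_of_ne_zero hq⟩
  have hNi : 0 < Real.sqrt (∑ q, (X i q) ^ 2) := Real.sqrt_pos.2 hSi
  have hNj : 0 < Real.sqrt (∑ q, (X j q) ^ 2) := Real.sqrt_pos.2 hSj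
  refine ⟨⟨fun k hk => hΓ0 k (fun h => hk (h ▸ hiU)) (fun h => hk (h ▸ hjU)), ?_⟩, ?_⟩
  · intro k _
    rcases eq_or_ne k i with rfl | hki
    · rw [show (∑ p, (Γ k p) ^ 2) = ∑ p, (δ * X j p / Real.sqrt (∑ q, (X j q) ^ 2)) ^ 2
        from Finset.sum_congr rfl (fun p _ => by rw [hΓi p]),
        sqrt_scaled _ _ hδ hSj]
    rcases eq_or_ne k j with rfl | hkj
    · rw [show (∑ p, (Γ k p) ^ 2) = ∑ p, (δ * X i p / Real.sqrt (∑ q, (X i q) ^ 2)) ^ 2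
        from Finset.sum_congr rfl (fun p _ => by rw [hΓj p]),
        sqrt_scaled _ _ hδ hSi]
    · have h0 := hΓ0 k hki hkj
      simp [h0, hδ]
  · -- the main computation
    have hNj' : Real.sqrt (∑ q, (X j q) ^ 2) = c * Real.sqrt (∑ q, (X i q) ^ 2) := by
      have : (∑ q, (X j q) ^ 2) = c ^ 2 * ∑ q, (X i q) ^ 2 := by
        rw [hpar, Finset.mul_sum]
        exact Finset.sum_congr rfl (fun p _ => by simp [Pi.smul_apply, smul_eq_mul]; ring)
      rw [this, Real.sqrt_mul (sq_nonneg _), Real.sqrt_sq hc.le]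
    set N := Real.sqrt (∑ q, (X i q) ^ 2) with hNdef
    have hN2 : N ^ 2 = ∑ q, (X i q) ^ 2 := Real.sq_sqrt hSi.le
    have hXjp : ∀ p, X j p = c * X i p := fun p => by rw [hpar]; simp
    simp only [Matrix.mul_apply, Matrix.transpose_apply, Matrix.add_apply]
    have hterm : ∀ p, (X i p + Γ i p) * (X j p + Γ j p)
        = X i p * X j p + (X i p) ^ 2 * ((δ + δ * c) / N + δ ^ 2 / N ^ 2) := by
      intro p
      rw [hΓi p, hΓj p, hNj', hXjp p]
      field_simp
      ring
    rw [Finset.sum_congr rfl (fun p _ => hterm p), Finset.sum_add_distrib, ← Finset.sum_mul]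
    rw [hNj', ← hN2]
    have hN0 : N ≠ 0 := hNi.ne'
    field_simp
    ring
end
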